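/- Let λ ∈ ℂ*, α, β ∈ ℂ and define operators on ℂ[t] by L_{i,1}·f(t) = ∑_{s≥0} (−1)^s β^{s+1}(t − iα − (s+1)αβ) f^{(s)}(t − i) and L_{i,2}·f(t) = ∑_{s≥0} (−1)^s (s+1) β^{s+2}(t − iα − (s+2)αβ) f^{(s)}(t − i), where f^{(s)} is the s-th derivative (the sums are finite since f is a polynomial). Then L_{i,1}·(L_{j,1}·f) − L_{j,1}·(L_{i,1}·f) = (j − i)·(L_{i+j,2}·f) for all i, j ∈ ℤ and f ∈ ℂ[t]. -/

import Mathlib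

open Polynomial

/-- The operator `L_{i,1}` of `W(-1)` on `ℂ[t]` in derivative form:
`L_{i,1}·f = ∑_{s≥0} (-1)^s β^{s+1}(t - iα - (s+1)αβ) f^{(s)}(t-i)`
(the sum is finite: terms with `s > deg f` vanish). -/
noncomputable def Wm1L1 (lam α β : ℂ) (i : ℤ) (f : ℂ[X]) : ℂ[X] :=
  ∑ s ∈ Finset.range (f.natDegree + 1),
    C (lam ^ i * (-1 : ℂ) ^ s * β ^ (s + 1)) *
      (X - C ((i : ℂ) * α + ((s : ℂ) + 1) * α * β)) *
      ((⇑(Polynomial.derivative (R := ℂ)))^[s] f).comp (X - C (i : ℂ))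

/-- The operator `L_{i,2}` of `W(-1)` on `ℂ[t]` in derivative form:
`L_{i,2}·f = ∑_{s≥0} (-1)^s (s+1) β^{s+2}(t - iα - (s+2)αβ) f^{(s)}(t-i)`. -/
noncomputable def Wm1L2 (lam α β : ℂ) (i : ℤ) (f : ℂ[X]) : ℂ[X] :=
  ∑ s ∈ Finset.range (f.natDegree + 1),
    C (lam ^ i * (-1 : ℂ) ^ s * ((s : ℂ) + 1) * β ^ (s + 2)) *
      (X - C ((i : ℂ) * α + ((s : ℂ) + 2) * α * β)) *
      ((⇑(Polynomial.derivative (R := ℂ)))^[s] f).comp (X - C (i : ℂ))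

/-! Let `S = ∑ₛ (-β)ˢ dˢ/dtˢ`, the inverse of `1 + β d/dt` on polynomials, and `Tᵢ g = g(t - i)`.
Since `∑ₛ (s+1)(-β)ˢ dˢ = S²` and `∑ₛ (s+1)(s+2)(-β)ˢ dˢ = 2S³`,
`L_{i,1} = λⁱβ ((t - iα) Tᵢ S - αβ Tᵢ S²)` and `L_{i,2} = λⁱβ² ((t - iα) Tᵢ S² - 2αβ Tᵢ S³)`.
From `[1 + β d/dt, t] = β` we get `S t = t S - β S²`; all these identities are checked after
applying the injective operator `1 + β d/dt`. Moving every `S` and `T` to the right in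
`L_{i,1} L_{j,1} f` leaves a polynomial identity in the `T_{i+j} Sᵏ f`. -/

open Finset

namespace Polynomial

variable {R : Type*} [CommRing R]

noncomputable def derivSeries (β : R) (a : ℕ → R) (f : R[X]) : R[X] :=
  ∑ s ∈ range (f.natDegree + 1), C (a s * (-β) ^ s) * derivative^[s] f

noncomputable def oneAddDerivative (β : R) : R[X] →ₗ[R] R[X] :=
  LinearMap.id + β • derivative

theorem oneAddDerivative_apply (β : R) (g : R[X]) :
    oneAddDerivative β g = g + C β * derivative g := by
  simp [oneAddDerivative, smul_eq_C_mul]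

theorem oneAddDerivative_injective (β : R) : Function.Injective (oneAddDerivative β) := by
  refine (injective_iff_map_eq_zero _).2 fun p hp => leadingCoeff_eq_zero.1 ?_
  have := congrArg (coeff · p.natDegree) hp
  simpa [oneAddDerivative_apply, coeff_derivative,
    coeff_eq_zero_of_natDegree_lt (Nat.lt_succ_self p.natDegree)] using this

theorem oneAddDerivative_C_mul (β c : R) (g : R[X]) :
    oneAddDerivative β (C c * g) = C c * oneAddDerivative β g := by
  rw [← smul_eq_C_mul, map_smul, smul_eq_C_mul]

theorem oneAddDerivative_X_sub_C_mul (β c : R) (g : R[X]) :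
    oneAddDerivative β ((X - C c) * g) = (X - C c) * oneAddDerivative β g + C β * g := by
  simp only [oneAddDerivative_apply, derivative_mul, derivative_X_sub_C]
  ring

theorem oneAddDerivative_comp_X_sub_C (β a : R) (g : R[X]) :
    oneAddDerivative β (g.comp (X - C a)) = (oneAddDerivative β g).comp (X - C a) := by
  simp [oneAddDerivative_apply, derivative_comp, add_comp, mul_comp]

theorem oneAddDerivative_derivSeries (β : R) {a b : ℕ → R} (h₀ : b 0 = a 0)
    (hsucc : ∀ s, b (s + 1) = a (s + 1) - a s) (f : R[X]) :
    oneAddDerivative β (derivSeries β a f) = derivSeries β b f := by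
  set N := f.natDegree
  have hD : ∀ s, C β * derivative (C (a s * (-β) ^ s) * derivative^[s] f) =
      -(C (a s * (-β) ^ (s + 1)) * derivative^[s + 1] f) := fun s => by
    rw [derivative_C_mul, ← Function.iterate_succ_apply' derivative, pow_succ]
    simp only [C_mul, C_neg]
    ring
  rw [oneAddDerivative_apply, derivSeries, derivSeries, derivative_sum, mul_sum]
  simp only [hD]
  rw [sum_range_succ (fun s => -(C (a s * (-β) ^ (s + 1)) * derivative^[s + 1] f)) N,
    iterate_derivative_eq_zero (Nat.lt_succ_self N), mul_zero, neg_zero, add_zero,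
    sum_range_succ' (fun s => C (a s * (-β) ^ s) * derivative^[s] f),
    sum_range_succ' (fun s => C (b s * (-β) ^ s) * derivative^[s] f), h₀,
    add_right_comm, ← sum_add_distrib]
  congr 1
  refine sum_congr rfl fun s _ => ?_
  rw [hsucc, sub_mul, C_sub, sub_mul]
  ring

theorem oneAddDerivative_derivSeries_one (β : R) (f : R[X]) :
    oneAddDerivative β (derivSeries β 1 f) = f := by
  rw [oneAddDerivative_derivSeries β (b := Pi.single 0 1) (by simp) (by simp), derivSeries,
    sum_eq_single_of_mem 0 (by simp) (fun s _ hs => by simp [hs])]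
  simp

theorem derivSeries_one_sub (β : R) (f g : R[X]) :
    derivSeries β 1 (f - g) = derivSeries β 1 f - derivSeries β 1 g :=
  oneAddDerivative_injective β <| by simp only [map_sub, oneAddDerivative_derivSeries_one]

theorem derivSeries_one_C_mul (β c : R) (f : R[X]) :
    derivSeries β 1 (C c * f) = C c * derivSeries β 1 f :=
  oneAddDerivative_injective β <| by
    rw [oneAddDerivative_C_mul, oneAddDerivative_derivSeries_one, oneAddDerivative_derivSeries_one]

theorem derivSeries_one_comp_X_sub_C (β a : R) (f : R[X]) :
    derivSeries β 1 (f.comp (X - C a)) = (derivSeries β 1 f).comp (X - C a) :=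
  oneAddDerivative_injective β <| by
    rw [oneAddDerivative_comp_X_sub_C, oneAddDerivative_derivSeries_one,
      oneAddDerivative_derivSeries_one]

theorem derivSeries_natCast_add_one (β : R) (f : R[X]) :
    derivSeries β (fun s => (s : R) + 1) f = derivSeries β 1 (derivSeries β 1 f) :=
  oneAddDerivative_injective β <| by
    rw [oneAddDerivative_derivSeries β (b := 1) (by simp) (by intro s; simp),
      oneAddDerivative_derivSeries_one]

theorem derivSeries_natCast_add_one_mul_add_two (β : R) (f : R[X]) :
    derivSeries β (fun s => ((s : R) + 1) * (s + 2)) f =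
      C 2 * derivSeries β 1 (derivSeries β 1 (derivSeries β 1 f)) :=
  oneAddDerivative_injective β <| by
    rw [oneAddDerivative_derivSeries β (b := fun s => 2 * ((s : R) + 1)) (by simp)
      (by intro s; push_cast; ring), oneAddDerivative_C_mul, oneAddDerivative_derivSeries_one,
      ← derivSeries_natCast_add_one, derivSeries, derivSeries, mul_sum]
    simp only [mul_assoc, C_mul]

theorem derivSeries_one_X_sub_C_mul (β c : R) (f : R[X]) :
    derivSeries β 1 ((X - C c) * f) =
      (X - C c) * derivSeries β 1 f - C β * derivSeries β 1 (derivSeries β 1 f) :=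
  oneAddDerivative_injective β <| by
    rw [map_sub, oneAddDerivative_X_sub_C_mul, oneAddDerivative_C_mul,
      oneAddDerivative_derivSeries_one, oneAddDerivative_derivSeries_one,
      oneAddDerivative_derivSeries_one, add_sub_cancel_right]

theorem derivSeries_one_X_sub_C_mul_comp_sub (β a c d : R) (g : R[X]) :
    derivSeries β 1 ((X - C c) * g.comp (X - C a) - C d * (derivSeries β 1 g).comp (X - C a)) =
      (X - C c) * (derivSeries β 1 g).comp (X - C a) -
        C (β + d) * (derivSeries β 1 (derivSeries β 1 g)).comp (X - C a) := by
  rw [derivSeries_one_sub, derivSeries_one_X_sub_C_mul, derivSeries_one_C_mul,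
    derivSeries_one_comp_X_sub_C, derivSeries_one_comp_X_sub_C, C_add]
  ring

theorem comp_X_sub_C_comp_X_sub_C (a b : R) (g : R[X]) :
    (g.comp (X - C b)).comp (X - C a) = g.comp (X - C (a + b)) := by
  rw [comp_assoc, sub_comp, X_comp, C_comp, C_add, sub_sub]

end Polynomial

section

variable (lam α β : ℂ)

local notation "𝒮" => derivSeries β 1

theorem Wm1L1_eq_derivSeries (i : ℤ) (f : ℂ[X]) :
    Wm1L1 lam α β i f = C (lam ^ i * β) *
      ((X - C (i * α)) * (𝒮 f).comp (X - C (i : ℂ)) -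
        C (α * β) * (𝒮 (𝒮 f)).comp (X - C (i : ℂ))) := by
  rw [← derivSeries_natCast_add_one, Wm1L1, derivSeries, derivSeries, Polynomial.sum_comp,
    Polynomial.sum_comp, mul_sum, mul_sum, ← sum_sub_distrib, mul_sum]
  refine sum_congr rfl fun s _ => ?_
  simp only [mul_comp, C_comp]
  simp only [Pi.one_apply, neg_pow β, C_mul, C_add, C_pow, C_1]
  ring

theorem Wm1L2_eq_derivSeries (i : ℤ) (f : ℂ[X]) :
    Wm1L2 lam α β i f = C (lam ^ i * β ^ 2) *
      ((X - C (i * α)) * (𝒮 (𝒮 f)).comp (X - C (i : ℂ)) -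
        C (α * β) * (C 2 * 𝒮 (𝒮 (𝒮 f))).comp (X - C (i : ℂ))) := by
  rw [← derivSeries_natCast_add_one_mul_add_two, ← derivSeries_natCast_add_one, Wm1L2,
    derivSeries, derivSeries, Polynomial.sum_comp, Polynomial.sum_comp, mul_sum, mul_sum,
    ← sum_sub_distrib, mul_sum]
  refine sum_congr rfl fun s _ => ?_
  simp only [mul_comp, C_comp]
  simp only [neg_pow β, C_mul, C_add, C_pow, C_1]
  ring

theorem Wm1L1_Wm1L1_eq_derivSeries (i j : ℤ) (f : ℂ[X]) :
    Wm1L1 lam α β i (Wm1L1 lam α β j f) = C (lam ^ i * lam ^ j * β ^ 2) *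
      ((X - C (i * α)) *
          ((X - C (i : ℂ) - C (j * α)) * (𝒮 (𝒮 f)).comp (X - C ((i : ℂ) + j)) -
            C (β + α * β) * (𝒮 (𝒮 (𝒮 f))).comp (X - C ((i : ℂ) + j))) -
        C (α * β) *
          ((X - C (i : ℂ) - C (j * α)) * (𝒮 (𝒮 (𝒮 f))).comp (X - C ((i : ℂ) + j)) -
            C (β + (β + α * β)) * (𝒮 (𝒮 (𝒮 (𝒮 f)))).comp (X - C ((i : ℂ) + j)))) := by
  rw [Wm1L1_eq_derivSeries lam α β i, Wm1L1_eq_derivSeries lam α β j, derivSeries_one_C_mul,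
    derivSeries_one_C_mul, derivSeries_one_X_sub_C_mul_comp_sub,
    derivSeries_one_X_sub_C_mul_comp_sub]
  simp only [mul_comp, sub_comp, C_comp, X_comp, comp_X_sub_C_comp_X_sub_C, C_mul, C_pow]
  ring

end

/-- `L_{i,1}·(L_{j,1}·f) - L_{j,1}·(L_{i,1}·f) = (j-i)·(L_{i+j,2}·f)`
for all `i, j ∈ ℤ` and `f ∈ ℂ[t]`. -/
theorem stmt_17 (lam α β : ℂ) (hlam : lam ≠ 0) (i j : ℤ) (f : ℂ[X]) :
    Wm1L1 lam α β i (Wm1L1 lam α β j f) - Wm1L1 lam α β j (Wm1L1 lam α β i f) =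
      ((j - i : ℤ) : ℂ) • Wm1L2 lam α β (i + j) f := by
  rw [Wm1L1_Wm1L1_eq_derivSeries, Wm1L1_Wm1L1_eq_derivSeries, Wm1L2_eq_derivSeries,
    zpow_add₀ hlam, add_comm (j : ℂ), smul_eq_C_mul]
  push_cast
  simp only [mul_comp, C_comp]
  simp only [C_mul, C_add, C_sub, C_pow, map_ofNat]
  ring
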